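/- Let I ⊆ κ, let 𝔄 be an algebra of subsets of 2^κ all of whose members are determined by coordinates in I, and let Z ⊆ 2^κ be determined by coordinates in κ \ I. Then every strictly positive finitely additive probability measure on 𝔄 extends to a strictly positive finitely additive probability measure on the algebra generated by 𝔄 ∪ {Z}. -/

import Mathlib

/-!
If `Z` depends only on coordinates outside `I` and is neither `∅` nor everything, it cuts every
nonempty set determined by coordinates in `I` into two nonempty pieces (glue a point of the set
on `I` to a point of `Z`, resp. of `Zᶜ`, off `I`). Consequently every member of the algebra
generated by `𝔄 ∪ {Z}` is `(A ∩ Z) ∪ (B \ Z)` for a *unique* pair `A, B ∈ 𝔄`, and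
`ν ((A ∩ Z) ∪ (B \ Z)) = (μ A + μ B) / 2` is the required extension: it gives `Z` and `Zᶜ`
conditional probability `1/2` each and is independent of `𝔄`. If `Z` is `∅` or everything, it
lies in `𝔄` already and `μ` itself works.
-/

open Set

/-- `𝔄` is an algebra of subsets of `X`. -/
def IsAlg {X : Type*} (𝔄 : Set (Set X)) : Prop :=
  ∅ ∈ 𝔄 ∧ (∀ A ∈ 𝔄, Aᶜ ∈ 𝔄) ∧ ∀ A ∈ 𝔄, ∀ B ∈ 𝔄, A ∪ B ∈ 𝔄

/-- `μ` is a finitely additive probability measure on the algebra `𝔄`. -/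
def IsFAProb {X : Type*} (𝔄 : Set (Set X)) (μ : Set X → ℝ) : Prop :=
  μ univ = 1 ∧ (∀ A ∈ 𝔄, 0 ≤ μ A) ∧
    ∀ A ∈ 𝔄, ∀ B ∈ 𝔄, Disjoint A B → μ (A ∪ B) = μ A + μ B

/-- `μ` is strictly positive on `𝔄`. -/
def StrictlyPos {X : Type*} (𝔄 : Set (Set X)) (μ : Set X → ℝ) : Prop :=
  ∀ A ∈ 𝔄, A.Nonempty → 0 < μ A

/-- A set `A ⊆ 2^κ` is determined by coordinates in `I`. -/
def DetBy {κ : Type*} (I : Set κ) (A : Set (κ → Bool)) : Prop :=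
  ∀ x ∈ A, ∀ y : κ → Bool, (∀ i ∈ I, y i = x i) → y ∈ A

/-- The algebra of sets generated by the family `S`. -/
inductive GenAlg {X : Type*} (S : Set (Set X)) : Set X → Prop
  | basic : ∀ A ∈ S, GenAlg S A
  | empty : GenAlg S ∅
  | compl : ∀ A, GenAlg S A → GenAlg S Aᶜ
  | union : ∀ A B, GenAlg S A → GenAlg S B → GenAlg S (A ∪ B)

open Function

section Algebra

variable {X : Type*} {𝔄 : Set (Set X)}

theorem IsAlg.compl_mem (h𝔄 : IsAlg 𝔄) {A : Set X} (hA : A ∈ 𝔄) : Aᶜ ∈ 𝔄 :=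
  h𝔄.2.1 A hA

theorem IsAlg.union_mem (h𝔄 : IsAlg 𝔄) {A B : Set X} (hA : A ∈ 𝔄) (hB : B ∈ 𝔄) :
    A ∪ B ∈ 𝔄 :=
  h𝔄.2.2 A hA B hB

theorem IsAlg.univ_mem (h𝔄 : IsAlg 𝔄) : univ ∈ 𝔄 := by
  simpa using h𝔄.compl_mem h𝔄.1

theorem IsAlg.inter_mem (h𝔄 : IsAlg 𝔄) {A B : Set X} (hA : A ∈ 𝔄) (hB : B ∈ 𝔄) :
    A ∩ B ∈ 𝔄 := by
  simpa [compl_union] using h𝔄.compl_mem (h𝔄.union_mem (h𝔄.compl_mem hA) (h𝔄.compl_mem hB))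

theorem GenAlg.mem_of_subset (h𝔄 : IsAlg 𝔄) {S : Set (Set X)} (hS : S ⊆ 𝔄) {C : Set X}
    (hC : GenAlg S C) : C ∈ 𝔄 := by
  induction hC with
  | basic A hA => exact hS hA
  | empty => exact h𝔄.1
  | compl A _ ih => exact h𝔄.compl_mem ih
  | union A B _ _ ihA ihB => exact h𝔄.union_mem ihA ihB

theorem IsFAProb.mono {𝔅 : Set (Set X)} {μ : Set X → ℝ} (hμ : IsFAProb 𝔄 μ) (h : 𝔅 ⊆ 𝔄) :
    IsFAProb 𝔅 μ :=
  ⟨hμ.1, fun A hA => hμ.2.1 A (h hA), fun A hA B hB => hμ.2.2 A (h hA) B (h hB)⟩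

theorem StrictlyPos.mono {𝔅 : Set (Set X)} {μ : Set X → ℝ} (hμ : StrictlyPos 𝔄 μ)
    (h : 𝔅 ⊆ 𝔄) : StrictlyPos 𝔅 μ :=
  fun A hA => hμ A (h hA)

end Algebra

section Ite

variable {X : Type*}

theorem Set.compl_ite (t s s' : Set X) : (t.ite s s')ᶜ = t.ite sᶜ s'ᶜ := by
  ext x; by_cases hx : x ∈ t <;> simp [Set.ite, hx]

theorem Set.ite_union_ite (t s₁ s₁' s₂ s₂' : Set X) :
    t.ite s₁ s₁' ∪ t.ite s₂ s₂' = t.ite (s₁ ∪ s₂) (s₁' ∪ s₂') := by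
  ext x; by_cases hx : x ∈ t <;> simp [Set.ite, hx]

theorem GenAlg.exists_ite_eq {𝔄 : Set (Set X)} (h𝔄 : IsAlg 𝔄) {Z C : Set X}
    (hC : GenAlg (𝔄 ∪ {Z}) C) : ∃ A ∈ 𝔄, ∃ B ∈ 𝔄, Z.ite A B = C := by
  induction hC with
  | basic A hA =>
    rcases hA with hA | rfl
    · exact ⟨A, hA, A, hA, ite_same _ _⟩
    · exact ⟨univ, h𝔄.univ_mem, ∅, h𝔄.1, by simp⟩
  | empty => exact ⟨∅, h𝔄.1, ∅, h𝔄.1, ite_same _ _⟩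
  | compl _ _ ih =>
    obtain ⟨A, hA, B, hB, rfl⟩ := ih
    exact ⟨Aᶜ, h𝔄.compl_mem hA, Bᶜ, h𝔄.compl_mem hB, (compl_ite _ _ _).symm⟩
  | union _ _ _ _ ih₁ ih₂ =>
    obtain ⟨A₁, hA₁, B₁, hB₁, rfl⟩ := ih₁
    obtain ⟨A₂, hA₂, B₂, hB₂, rfl⟩ := ih₂
    exact ⟨A₁ ∪ A₂, h𝔄.union_mem hA₁ hA₂, B₁ ∪ B₂, h𝔄.union_mem hB₁ hB₂,
      (ite_union_ite _ _ _ _ _).symm⟩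

end Ite

def MeetsEvery {X : Type*} (𝔄 : Set (Set X)) (W : Set X) : Prop :=
  ∀ A ∈ 𝔄, A.Nonempty → (A ∩ W).Nonempty

section MeetsEvery

variable {X : Type*} {𝔄 : Set (Set X)}

theorem MeetsEvery.disjoint_of_disjoint_inter {W : Set X} (hW : MeetsEvery 𝔄 W)
    (h𝔄 : IsAlg 𝔄) {A B : Set X} (hA : A ∈ 𝔄) (hB : B ∈ 𝔄)
    (h : Disjoint (A ∩ W) (B ∩ W)) : Disjoint A B := by
  by_contra hAB
  obtain ⟨x, ⟨hxA, hxB⟩, hxW⟩ :=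
    hW _ (h𝔄.inter_mem hA hB) (not_disjoint_iff_nonempty_inter.mp hAB)
  exact disjoint_left.mp h ⟨hxA, hxW⟩ ⟨hxB, hxW⟩

theorem MeetsEvery.subset_of_inter_subset {W : Set X} (hW : MeetsEvery 𝔄 W)
    (h𝔄 : IsAlg 𝔄) {A B : Set X} (hA : A ∈ 𝔄) (hB : B ∈ 𝔄) (h : A ∩ W ⊆ B ∩ W) :
    A ⊆ B := by
  have hdisj : Disjoint (A ∩ W) (Bᶜ ∩ W) :=
    disjoint_left.mpr fun x hx hx' => hx'.1 (h hx).1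
  exact disjoint_compl_right_iff_subset.mp
    (hW.disjoint_of_disjoint_inter h𝔄 hA (h𝔄.compl_mem hB) hdisj)

theorem MeetsEvery.eq_of_inter_eq {W : Set X} (hW : MeetsEvery 𝔄 W) (h𝔄 : IsAlg 𝔄)
    {A B : Set X} (hA : A ∈ 𝔄) (hB : B ∈ 𝔄) (h : A ∩ W = B ∩ W) : A = B :=
  (hW.subset_of_inter_subset h𝔄 hA hB h.le).antisymm (hW.subset_of_inter_subset h𝔄 hB hA h.ge)

theorem injective_ite_of_meetsEvery (h𝔄 : IsAlg 𝔄) {Z : Set X} (hZ : MeetsEvery 𝔄 Z)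
    (hZc : MeetsEvery 𝔄 Zᶜ) : Injective fun p : 𝔄 × 𝔄 => Z.ite p.1 p.2 := by
  rintro ⟨⟨A, hA⟩, ⟨B, hB⟩⟩ ⟨⟨A', hA'⟩, ⟨B', hB'⟩⟩ h
  have hZpart : A ∩ Z = A' ∩ Z := by
    simpa only [ite_inter_self] using congrArg (· ∩ Z) h
  have hZcpart : B ∩ Zᶜ = B' ∩ Zᶜ := by
    simpa only [ite_inter_compl_self] using congrArg (· ∩ Zᶜ) h
  simp only [Prod.mk.injEq, Subtype.mk.injEq]
  exact ⟨hZ.eq_of_inter_eq h𝔄 hA hA' hZpart, hZc.eq_of_inter_eq h𝔄 hB hB' hZcpart⟩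

end MeetsEvery

section Extension

variable {X : Type*} {𝔄 : Set (Set X)} {Z : Set X} {μ : Set X → ℝ}

-- Only meaningful when the representation `Z.ite A B` is unique (`injective_ite_of_meetsEvery`);
-- the default value `0` is junk.
noncomputable def halfExtension (𝔄 : Set (Set X)) (Z : Set X) (μ : Set X → ℝ) :
    Set X → ℝ :=
  extend (fun p : 𝔄 × 𝔄 => Z.ite p.1 p.2) (fun p => (μ p.1 + μ p.2) / 2) 0

theorem halfExtension_ite (h𝔄 : IsAlg 𝔄) (hZ : MeetsEvery 𝔄 Z) (hZc : MeetsEvery 𝔄 Zᶜ)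
    {A B : Set X} (hA : A ∈ 𝔄) (hB : B ∈ 𝔄) :
    halfExtension 𝔄 Z μ (Z.ite A B) = (μ A + μ B) / 2 :=
  (injective_ite_of_meetsEvery h𝔄 hZ hZc).extend_apply _ _ (⟨A, hA⟩, ⟨B, hB⟩)

theorem exists_extension_of_meetsEvery (h𝔄 : IsAlg 𝔄) (hZ : MeetsEvery 𝔄 Z)
    (hZc : MeetsEvery 𝔄 Zᶜ) (hμ : IsFAProb 𝔄 μ) (hsp : StrictlyPos 𝔄 μ) :
    ∃ ν : Set X → ℝ, (∀ A ∈ 𝔄, ν A = μ A) ∧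
      IsFAProb {C | GenAlg (𝔄 ∪ {Z}) C} ν ∧ StrictlyPos {C | GenAlg (𝔄 ∪ {Z}) C} ν := by
  have hν : ∀ {A B}, A ∈ 𝔄 → B ∈ 𝔄 → halfExtension 𝔄 Z μ (Z.ite A B) = (μ A + μ B) / 2 :=
    halfExtension_ite h𝔄 hZ hZc
  have hext : ∀ A ∈ 𝔄, halfExtension 𝔄 Z μ A = μ A := fun A hA => by
    simpa using hν hA hA
  refine ⟨halfExtension 𝔄 Z μ, hext, ⟨?_, ?_, ?_⟩, ?_⟩
  · rw [hext univ h𝔄.univ_mem, hμ.1]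
  · intro C hC
    obtain ⟨A, hA, B, hB, rfl⟩ := hC.exists_ite_eq h𝔄
    rw [hν hA hB]
    linarith [hμ.2.1 A hA, hμ.2.1 B hB]
  · intro C₁ hC₁ C₂ hC₂ hdisj
    obtain ⟨A₁, hA₁, B₁, hB₁, rfl⟩ := hC₁.exists_ite_eq h𝔄
    obtain ⟨A₂, hA₂, B₂, hB₂, rfl⟩ := hC₂.exists_ite_eq h𝔄
    have hA : Disjoint A₁ A₂ := hZ.disjoint_of_disjoint_inter h𝔄 hA₁ hA₂ <| by
      rw [← ite_inter_self Z A₁ B₁, ← ite_inter_self Z A₂ B₂]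
      exact hdisj.mono inter_subset_left inter_subset_left
    have hB : Disjoint B₁ B₂ := hZc.disjoint_of_disjoint_inter h𝔄 hB₁ hB₂ <| by
      rw [← ite_inter_compl_self Z A₁ B₁, ← ite_inter_compl_self Z A₂ B₂]
      exact hdisj.mono inter_subset_left inter_subset_left
    rw [ite_union_ite, hν (h𝔄.union_mem hA₁ hA₂) (h𝔄.union_mem hB₁ hB₂), hν hA₁ hB₁,
      hν hA₂ hB₂, hμ.2.2 _ hA₁ _ hA₂ hA, hμ.2.2 _ hB₁ _ hB₂ hB]
    ring
  · intro C hC hne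
    obtain ⟨A, hA, B, hB, rfl⟩ := hC.exists_ite_eq h𝔄
    rw [hν hA hB]
    rcases hne.mono (ite_subset_union _ _ _) with ⟨x, hx | hx⟩
    · linarith [hsp A hA ⟨x, hx⟩, hμ.2.1 B hB]
    · linarith [hsp B hB ⟨x, hx⟩, hμ.2.1 A hA]

end Extension

section Coordinates

variable {κ : Type*} {I : Set κ}

theorem DetBy.compl {Z : Set (κ → Bool)} (hZ : DetBy I Z) : DetBy I Zᶜ :=
  fun x hx y hy hyZ => hx (hZ y hyZ x fun i hi => (hy i hi).symm)

theorem DetBy.inter_nonempty {A W : Set (κ → Bool)} (hA : DetBy I A) (hW : DetBy Iᶜ W)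
    (hAne : A.Nonempty) (hWne : W.Nonempty) : (A ∩ W).Nonempty := by
  classical
  obtain ⟨x, hx⟩ := hAne
  obtain ⟨z, hz⟩ := hWne
  exact ⟨I.piecewise x z, hA x hx _ fun i hi => piecewise_eq_of_mem _ _ _ hi,
    hW z hz _ fun i hi => piecewise_eq_of_notMem _ _ _ hi⟩

theorem meetsEvery_of_detBy {𝔄 : Set (Set (κ → Bool))} (hdet : ∀ A ∈ 𝔄, DetBy I A)
    {W : Set (κ → Bool)} (hW : DetBy Iᶜ W) (hWne : W.Nonempty) : MeetsEvery 𝔄 W :=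
  fun A hA hAne => (hdet A hA).inter_nonempty hW hAne hWne

end Coordinates

/-- If all members of `𝔄` are determined by coordinates in `I` and `Z` is determined
by coordinates in `κ \ I`, then every strictly positive finitely additive probability
measure on `𝔄` extends to a strictly positive one on the algebra generated by
`𝔄 ∪ {Z}`. -/
theorem stmt_7 {κ : Type*} (I : Set κ) (𝔄 : Set (Set (κ → Bool))) (h𝔄 : IsAlg 𝔄)
    (hdet : ∀ A ∈ 𝔄, DetBy I A) (Z : Set (κ → Bool)) (hZ : DetBy Iᶜ Z)
    (μ : Set (κ → Bool) → ℝ) (hμ : IsFAProb 𝔄 μ) (hsp : StrictlyPos 𝔄 μ) :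
    ∃ ν : Set (κ → Bool) → ℝ, (∀ A ∈ 𝔄, ν A = μ A) ∧
      IsFAProb {C | GenAlg (𝔄 ∪ {Z}) C} ν ∧
      StrictlyPos {C | GenAlg (𝔄 ∪ {Z}) C} ν := by
  by_cases hZ𝔄 : Z ∈ 𝔄
  · have hsub : {C | GenAlg (𝔄 ∪ {Z}) C} ⊆ 𝔄 := fun C hC =>
      GenAlg.mem_of_subset h𝔄 (union_subset subset_rfl (singleton_subset_iff.mpr hZ𝔄)) hC
    exact ⟨μ, fun _ _ => rfl, hμ.mono hsub, hsp.mono hsub⟩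
  · have hZne : Z.Nonempty := nonempty_iff_ne_empty.mpr fun h => hZ𝔄 (h ▸ h𝔄.1)
    have hZcne : Zᶜ.Nonempty := nonempty_compl.mpr fun h => hZ𝔄 (h ▸ h𝔄.univ_mem)
    exact exists_extension_of_meetsEvery h𝔄 (meetsEvery_of_detBy hdet hZ hZne)
      (meetsEvery_of_detBy hdet hZ.compl hZcne) hμ hsp
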